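/- For the k-fold convolution of the biased riffle shuffle P_{n,a,p}, the total variation distance to the uniform distribution U on S_n satisfies ||P_{n,a,p}^{*k} − U|| ≤ C(n,2) · (p_1² + ... + p_a²)^k. -/

import Mathlib

open Finset

/-- The biased riffle shuffle measure on `S_n` for a probability vector `p` indexed by
a linearly ordered alphabet `α`, via the inverse description: each card is independently
assigned a letter (letter `c` with probability `p c`), the cards are stably sorted by
letter (`Tuple.sort`), and the shuffle is the inverse of the resulting rearrangement. -/
noncomputable def shuffleP (n : ℕ) {α : Type*} [Fintype α] [LinearOrder α]
    (p : α → ℝ) (π : Equiv.Perm (Fin n)) : ℝ :=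
  ∑ f ∈ Finset.univ.filter (fun f : Fin n → α => (Tuple.sort f)⁻¹ = π), ∏ i, p (f i)

/-- The `k`-fold convolution of a probability assignment `P` on `S_n`:
`P^{*0}` is the point mass at the identity and `P^{*(k+1)}(π) = ∑_σ P(σ) P^{*k}(σ⁻¹π)`. -/
noncomputable def convPow (n : ℕ) (P : Equiv.Perm (Fin n) → ℝ) :
    ℕ → Equiv.Perm (Fin n) → ℝ
  | 0 => fun π => if π = 1 then 1 else 0
  | k + 1 => fun π => ∑ σ : Equiv.Perm (Fin n), P σ * convPow n P k (σ⁻¹ * π)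

/-! ### Stable sorting composes along lexicographic products -/

lemma sort_lex_comp {n : ℕ} {α β : Type*} [LinearOrder α] [LinearOrder β]
    (g : Fin n → α) (h : Fin n → β) :
    Tuple.sort (fun i => toLex (g i, h i)) =
      Tuple.sort h * Tuple.sort (g ∘ Tuple.sort h) := by
  set σ := Tuple.sort h with hσ
  set τ := Tuple.sort (g ∘ σ) with hτ
  have hhs : Monotone (h ∘ σ) := Tuple.monotone_sort h
  have hhstab : ∀ i j, i < j → h (σ i) = h (σ j) → σ i < σ j :=
    (Tuple.eq_sort_iff.mp hσ).2
  have hgs : Monotone ((g ∘ σ) ∘ τ) := Tuple.monotone_sort (g ∘ σ)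
  have hgstab : ∀ i j, i < j → (g ∘ σ) (τ i) = (g ∘ σ) (τ j) → τ i < τ j :=
    (Tuple.eq_sort_iff.mp hτ).2
  symm
  rw [Tuple.eq_sort_iff]
  constructor
  · intro i j hij
    rcases eq_or_lt_of_le hij with rfl | hij
    · exact le_rfl
    simp only [Function.comp_apply, Equiv.Perm.mul_apply]
    rw [Prod.Lex.le_iff]
    rcases eq_or_lt_of_le (hgs hij.le) with he | hl
    · refine Or.inr ⟨he, ?_⟩
      exact hhs (hgstab i j hij he).le
    · exact Or.inl hl
  · intro i j hij hfe
    simp only [Equiv.Perm.mul_apply] at hfe ⊢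
    have h1 : g (σ (τ i)) = g (σ (τ j)) := congrArg (fun x => (ofLex x).1) hfe
    have h2 : h (σ (τ i)) = h (σ (τ j)) := congrArg (fun x => (ofLex x).2) hfe
    exact hhstab _ _ (hgstab i j hij h1) h2

/-! ### The trivial shuffle and convolutions of shuffles -/

lemma shuffleP_unit (n : ℕ) (π : Equiv.Perm (Fin n)) :
    shuffleP n (fun _ : PUnit => (1:ℝ)) π = if π = 1 then 1 else 0 := by
  classical
  have hs : Tuple.sort (fun _ : Fin n => PUnit.unit) = Equiv.refl _ :=
    Tuple.sort_eq_refl_iff_monotone.mpr (monotone_const)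
  rw [shuffleP]
  rcases eq_or_ne π 1 with rfl | hne
  · rw [if_pos rfl]
    have : (Finset.univ.filter (fun f : Fin n → PUnit => (Tuple.sort f)⁻¹ = 1)) = Finset.univ := by
      apply Finset.filter_true_of_mem
      intro f _
      have : f = fun _ => PUnit.unit := funext fun _ => rfl
      rw [this, hs]; rfl
    rw [this]
    simp
  · rw [if_neg hne]
    refine Finset.sum_eq_zero ?_
    intro f hf
    exfalso
    rw [Finset.mem_filter] at hf
    have hfc : f = fun _ => PUnit.unit := funext fun _ => rfl
    rw [hfc, hs] at hf
    exact hne (by rw [← hf.2]; rfl)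

lemma shuffleP_conv {n : ℕ} {α β : Type*} [Fintype α] [LinearOrder α]
    [Fintype β] [LinearOrder β] (p : α → ℝ) (q : β → ℝ) (π : Equiv.Perm (Fin n)) :
    ∑ σ : Equiv.Perm (Fin n), shuffleP n p σ * shuffleP n q (σ⁻¹ * π)
      = shuffleP n (fun x : α ×ₗ β => p (ofLex x).1 * q (ofLex x).2) π := by
  classical
  have lhs1 : ∀ σ : Equiv.Perm (Fin n),
      shuffleP n p σ * shuffleP n q (σ⁻¹ * π)
        = ∑ g : Fin n → α, ∑ h : Fin n → β,
            (if (Tuple.sort g)⁻¹ = σ then ∏ i, p (g i) else 0) *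
            (if (Tuple.sort h)⁻¹ = σ⁻¹ * π then ∏ i, q (h i) else 0) := by
    intro σ
    rw [shuffleP, shuffleP, Finset.sum_filter, Finset.sum_filter, Finset.sum_mul_sum]
  calc ∑ σ : Equiv.Perm (Fin n), shuffleP n p σ * shuffleP n q (σ⁻¹ * π)
      = ∑ g : Fin n → α, ∑ h : Fin n → β,
          (if (Tuple.sort h * Tuple.sort g)⁻¹ = π then (∏ i, p (g i)) * ∏ i, q (h i) else 0) := by
        simp_rw [lhs1]
        rw [Finset.sum_comm]
        refine Finset.sum_congr rfl fun g _ => ?_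
        rw [Finset.sum_comm]
        refine Finset.sum_congr rfl fun h _ => ?_
        rw [Finset.sum_eq_single ((Tuple.sort g)⁻¹)]
        · rcases eq_or_ne ((Tuple.sort h * Tuple.sort g)⁻¹) π with he | hne
          · rw [if_pos he, if_pos rfl, if_pos]
            rw [inv_inv, ← he]
            group
          · rw [if_neg hne, if_pos rfl, if_neg, mul_zero]
            intro hc
            apply hne
            rw [mul_inv_rev, hc, inv_inv]
            group
        · intro σ _ hσ
          rw [if_neg (Ne.symm hσ), zero_mul]
        · intro hmem; exact absurd (Finset.mem_univ _) hmem
    _ = ∑ h : Fin n → β, ∑ g : Fin n → α,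
          (if (Tuple.sort h * Tuple.sort (g ∘ Tuple.sort h))⁻¹ = π
            then (∏ i, p (g i)) * ∏ i, q (h i) else 0) := by
        rw [Finset.sum_comm]
        refine Finset.sum_congr rfl fun h _ => ?_
        refine (Fintype.sum_equiv
          (Equiv.arrowCongr ((Tuple.sort h) : Fin n ≃ Fin n) (Equiv.refl α)).symm _ _ ?_).symm
        intro g
        have hg : (Equiv.arrowCongr ((Tuple.sort h) : Fin n ≃ Fin n) (Equiv.refl α)).symm g
            = g ∘ (Tuple.sort h) := by
          funext i; simp [Equiv.arrowCongr]
        rw [hg]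
        have hprod : ∏ i, p (g (Tuple.sort h i)) = ∏ i, p (g i) :=
          Equiv.prod_comp (Tuple.sort h) (fun j => p (g j))
        simp only [Function.comp_apply]
        rw [hprod]
    _ = shuffleP n (fun x : α ×ₗ β => p (ofLex x).1 * q (ofLex x).2) π := by
        rw [shuffleP, Finset.sum_filter]
        refine Eq.symm ((Fintype.sum_equiv
          (⟨fun F => (fun i => (ofLex (F i)).2, fun i => (ofLex (F i)).1),
            fun hg i => toLex (hg.2 i, hg.1 i), fun F => rfl, fun hg => rfl⟩ :
            (Fin n → α ×ₗ β) ≃ ((Fin n → β) × (Fin n → α)))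
          (fun F => if (Tuple.sort F)⁻¹ = π then ∏ i, p (ofLex (F i)).1 * q (ofLex (F i)).2 else 0)
          (fun hg => if (Tuple.sort hg.1 * Tuple.sort (hg.2 ∘ Tuple.sort hg.1))⁻¹ = π
            then (∏ i, p (hg.2 i)) * ∏ i, q (hg.1 i) else 0) ?_).trans ?_)
        · intro F
          show _ = if (Tuple.sort (fun i => (ofLex (F i)).2) *
              Tuple.sort ((fun i => (ofLex (F i)).1) ∘ Tuple.sort (fun i => (ofLex (F i)).2)))⁻¹ = π
              then (∏ i, p (ofLex (F i)).1) * ∏ i, q (ofLex (F i)).2 else 0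
          rw [← sort_lex_comp (fun i => (ofLex (F i)).1) (fun i => (ofLex (F i)).2)]
          have hF : (fun i => toLex ((ofLex (F i)).1, (ofLex (F i)).2)) = F := funext fun i => by simp
          rw [hF]
          simp only [Finset.prod_mul_distrib]
        · rw [Fintype.sum_prod_type]

/-! ### The iterated alphabet -/

/-- Alphabet for the `k`-fold convolution: lexicographic `k`-fold product of `Fin a`. -/
def Alph (a : ℕ) : ℕ → Type
  | 0 => PUnit
  | k+1 => Fin a ×ₗ Alph a k

instance AlphLO (a : ℕ) : (k : ℕ) → LinearOrder (Alph a k)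
  | 0 => inferInstanceAs (LinearOrder PUnit)
  | k+1 => @Prod.Lex.instLinearOrder (Fin a) (Alph a k) _ (AlphLO a k)

instance AlphFT (a : ℕ) : (k : ℕ) → Fintype (Alph a k)
  | 0 => inferInstanceAs (Fintype PUnit)
  | k+1 => letI := AlphFT a k; inferInstanceAs (Fintype (Fin a ×ₗ Alph a k))

/-- Product weights on the iterated alphabet. -/
noncomputable def wt {a : ℕ} (p : Fin a → ℝ) : (k : ℕ) → Alph a k → ℝ
  | 0, _ => 1
  | k+1, x => p (ofLex x).1 * wt p k (ofLex x).2

lemma convPow_eq (n a : ℕ) (p : Fin a → ℝ) : ∀ (k : ℕ) (π : Equiv.Perm (Fin n)),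
    convPow n (shuffleP n p) k π = shuffleP n (wt p k) π
  | 0, π => (shuffleP_unit n π).symm
  | k+1, π => by
    show (∑ σ : Equiv.Perm (Fin n), shuffleP n p σ * convPow n (shuffleP n p) k (σ⁻¹ * π)) = _
    simp_rw [convPow_eq n a p k]
    rw [shuffleP_conv p (wt p k) π]
    rfl

lemma wt_nonneg {a : ℕ} (p : Fin a → ℝ) (hp : ∀ i, 0 ≤ p i) :
    ∀ (k : ℕ) (x : Alph a k), 0 ≤ wt p k x
  | 0, _ => zero_le_one
  | k+1, x => mul_nonneg (hp _) (wt_nonneg p hp k _)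

lemma wt_sum_pow {a : ℕ} (p : Fin a → ℝ) (m : ℕ) :
    ∀ k : ℕ, ∑ x : Alph a k, (wt p k x) ^ m = (∑ i, (p i) ^ m) ^ k
  | 0 => by
    have hc : Fintype.card (Alph a 0) = 1 := rfl
    simp [wt, hc]
  | k+1 => by
    rw [show ((k:ℕ)+1) = k+1 from rfl, pow_succ]
    rw [← wt_sum_pow p m k]
    refine ((Fintype.sum_equiv
      ((toLex : Fin a × Alph a k ≃ Lex (Fin a × Alph a k)) : Fin a × Alph a k ≃ Alph a (k+1))
      (fun y => (p y.1) ^ m * (wt p k y.2) ^ m)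
      (fun x => (wt p (k+1) x) ^ m) ?_).symm).trans ?_
    · intro y
      show (p y.1) ^ m * (wt p k y.2) ^ m = (p (ofLex (toLex y)).1 * wt p k (ofLex (toLex y)).2) ^ m
      rw [ofLex_toLex, mul_pow]
    · rw [Fintype.sum_prod_type]
      simp_rw [← Finset.mul_sum]
      rw [← Finset.sum_mul, mul_comm]

/-! ### The injective and non-injective parts of a shuffle -/

open Classical in
/-- The part of the shuffle measure coming from injective letter assignments. -/
noncomputable def Ainj (n : ℕ) {α : Type*} [Fintype α] [LinearOrder α] (w : α → ℝ)
    (π : Equiv.Perm (Fin n)) : ℝ :=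
  ∑ f ∈ Finset.univ.filter
      (fun f : Fin n → α => Function.Injective f ∧ (Tuple.sort f)⁻¹ = π), ∏ i, w (f i)

open Classical in
/-- The part of the shuffle measure coming from non-injective letter assignments. -/
noncomputable def Bni (n : ℕ) {α : Type*} [Fintype α] [LinearOrder α] (w : α → ℝ)
    (π : Equiv.Perm (Fin n)) : ℝ :=
  ∑ f ∈ Finset.univ.filter
      (fun f : Fin n → α => ¬ Function.Injective f ∧ (Tuple.sort f)⁻¹ = π), ∏ i, w (f i)

section TV
variable {n : ℕ} {α : Type*} [Fintype α] [LinearOrder α] (w : α → ℝ)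

lemma shuffleP_split (π : Equiv.Perm (Fin n)) :
    shuffleP n w π = Ainj n w π + Bni n w π := by
  classical
  rw [shuffleP, Ainj, Bni, ← Finset.sum_filter_add_sum_filter_not
    (Finset.univ.filter (fun f : Fin n → α => (Tuple.sort f)⁻¹ = π))
    (fun f => Function.Injective f)]
  rw [Finset.filter_filter, Finset.filter_filter]
  congr 1
  · apply Finset.sum_congr _ (fun _ _ => rfl)
    apply Finset.filter_congr; intro f _; simp [and_comm]
  · apply Finset.sum_congr _ (fun _ _ => rfl)
    apply Finset.filter_congr; intro f _; simp [and_comm]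

lemma Ainj_const (π : Equiv.Perm (Fin n)) : Ainj n w π = Ainj n w 1 := by
  classical
  rw [Ainj, Ainj]
  refine Finset.sum_nbij' (fun f => f ∘ ⇑π⁻¹) (fun g => g ∘ ⇑π) ?_ ?_ ?_ ?_ ?_
  · intro f hf
    simp only [Finset.mem_filter, Finset.mem_univ, true_and] at hf ⊢
    obtain ⟨hinj, hsort⟩ := hf
    have hs2 : Tuple.sort f = π⁻¹ := by rw [← hsort, inv_inv]
    refine ⟨hinj.comp (Equiv.injective _), ?_⟩
    have hmono : Monotone (f ∘ ⇑π⁻¹) := by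
      rw [← hs2]; exact Tuple.monotone_sort f
    rw [Tuple.sort_eq_refl_iff_monotone.mpr hmono]
    rfl
  · intro g hg
    simp only [Finset.mem_filter, Finset.mem_univ, true_and] at hg ⊢
    obtain ⟨hinj, hsort⟩ := hg
    have hs1 : Tuple.sort g = Equiv.refl _ := by
      rw [← inv_inv (Tuple.sort g), hsort]; rfl
    have hmono : Monotone g := Tuple.sort_eq_refl_iff_monotone.mp hs1
    refine ⟨hinj.comp (Equiv.injective _), ?_⟩
    have : π⁻¹ = Tuple.sort (g ∘ ⇑π) := by
      rw [Tuple.eq_sort_iff]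
      constructor
      · have he : (g ∘ ⇑π) ∘ ⇑π⁻¹ = g := by funext i; simp
        rw [he]; exact hmono
      · intro i j hij heq
        simp only [Function.comp_apply, Equiv.Perm.inv_def, Equiv.apply_symm_apply] at heq
        exact absurd (hinj heq) hij.ne
    rw [← this, inv_inv]
  · intro f _; funext i; simp
  · intro g _; funext i; simp
  · intro f _
    exact (Equiv.prod_comp π⁻¹ (fun j => w (f j))).symm

end TV

/-! ### Union bound ingredients -/

lemma sum_biUnion_le_sum {ι κ : Type*} [DecidableEq κ] (s : Finset ι) (t : ι → Finset κ)
    (f : κ → ℝ) (hf : ∀ x, 0 ≤ f x) :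
    ∑ x ∈ s.biUnion t, f x ≤ ∑ i ∈ s, ∑ x ∈ t i, f x := by
  classical
  induction s using Finset.induction_on with
  | empty => simp
  | insert _ _ h ih =>
    rename_i a s'
    rw [Finset.biUnion_insert, Finset.sum_insert h]
    have h1 := Finset.sum_union_inter (s₁ := t a) (s₂ := s'.biUnion t) (f := f)
    have h2 : 0 ≤ ∑ x ∈ t a ∩ s'.biUnion t, f x := Finset.sum_nonneg fun x _ => hf x
    linarith

lemma pair_sum {n : ℕ} {α : Type*} [Fintype α] [LinearOrder α] (w : α → ℝ)
    (hs : ∑ c, w c = 1) {i j : Fin n} (hij : i ≠ j) :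
    ∑ f ∈ Finset.univ.filter (fun f : Fin n → α => f i = f j), ∏ k, w (f k)
      = ∑ c, (w c)^2 := by
  classical
  rw [← Finset.sum_fiberwise (Finset.univ.filter (fun f : Fin n → α => f i = f j))
    (fun f => f i) (fun f => ∏ k, w (f k))]
  refine Finset.sum_congr rfl fun c _ => ?_
  have hfil : (Finset.univ.filter (fun f : Fin n → α => f i = f j)).filter
      (fun f => f i = c) = Fintype.piFinset
        (fun k => if k = i ∨ k = j then ({c} : Finset α) else Finset.univ) := by
    ext f
    simp only [Finset.mem_filter, Finset.mem_univ, true_and, Fintype.mem_piFinset]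
    constructor
    · rintro ⟨hij', hic⟩ k
      by_cases hk : k = i ∨ k = j
      · rw [if_pos hk, Finset.mem_singleton]
        rcases hk with rfl | rfl
        · exact hic
        · rw [← hij']; exact hic
      · rw [if_neg hk]; exact Finset.mem_univ _
    · intro hf
      have hi' := hf i
      have hj' := hf j
      rw [if_pos (Or.inl rfl), Finset.mem_singleton] at hi'
      rw [if_pos (Or.inr rfl), Finset.mem_singleton] at hj'
      exact ⟨hi'.trans hj'.symm, hi'⟩
  rw [hfil, ← Finset.prod_univ_sum]
  have : ∀ k : Fin n, (∑ b ∈ (if k = i ∨ k = j then ({c} : Finset α) else Finset.univ), w b)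
      = if k ∈ ({i, j} : Finset (Fin n)) then w c else 1 := by
    intro k
    by_cases hk : k = i ∨ k = j
    · rw [if_pos hk, if_pos (by rcases hk with rfl | rfl <;> simp)]
      exact Finset.sum_singleton _ _
    · rw [if_neg hk, if_neg (by simpa using hk), hs]
  simp_rw [this]
  rw [Finset.prod_ite_mem, Finset.univ_inter, Finset.prod_const,
    Finset.card_insert_of_notMem (by simp [hij]), Finset.card_singleton]

lemma card_pairs (n : ℕ) :
    (Finset.univ.filter (fun ij : Fin n × Fin n => ij.1 < ij.2)).card = n.choose 2 := by
  classical
  rw [Finset.card_filter, Fintype.sum_prod_type, Finset.sum_comm]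
  have : ∀ j : Fin n, (∑ i : Fin n, if i < j then 1 else 0) = (j : ℕ) := by
    intro j
    rw [← Finset.card_filter]
    have : Finset.univ.filter (fun i : Fin n => i < j) = Finset.Iio j := by
      ext; simp
    rw [this, Fin.card_Iio]
  simp_rw [this]
  rw [Fin.sum_univ_eq_sum_range (fun i => i) n, Finset.sum_range_id, Nat.choose_two_right]

lemma noninj_bound {n : ℕ} {α : Type*} [Fintype α] [LinearOrder α] (w : α → ℝ)
    [DecidablePred (Function.Injective : (Fin n → α) → Prop)]
    (hw : ∀ c, 0 ≤ w c) (hs : ∑ c, w c = 1) :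
    ∑ f ∈ Finset.univ.filter (fun f : Fin n → α => ¬ Function.Injective f), ∏ i, w (f i)
      ≤ (n.choose 2 : ℝ) * ∑ c, (w c)^2 := by
  classical
  set P := Finset.univ.filter (fun ij : Fin n × Fin n => ij.1 < ij.2) with hP
  have hsub : Finset.univ.filter (fun f : Fin n → α => ¬ Function.Injective f)
      ⊆ P.biUnion (fun ij => Finset.univ.filter (fun f : Fin n → α => f ij.1 = f ij.2)) := by
    intro f hf
    rw [Finset.mem_filter] at hf
    obtain ⟨a, b, hab, hne⟩ := Function.not_injective_iff.mp hf.2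
    rw [Finset.mem_biUnion]
    rcases hne.lt_or_gt with hlt | hlt
    · exact ⟨(a, b), by simp [hP, hlt], by simp [hab]⟩
    · exact ⟨(b, a), by simp [hP, hlt], by simp [hab.symm]⟩
  have hnn : ∀ f : Fin n → α, 0 ≤ ∏ i, w (f i) :=
    fun f => Finset.prod_nonneg fun i _ => hw _
  calc ∑ f ∈ Finset.univ.filter (fun f : Fin n → α => ¬ Function.Injective f), ∏ i, w (f i)
      ≤ ∑ f ∈ P.biUnion (fun ij => Finset.univ.filter
          (fun f : Fin n → α => f ij.1 = f ij.2)), ∏ i, w (f i) :=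
        Finset.sum_le_sum_of_subset_of_nonneg hsub (fun f _ _ => hnn f)
    _ ≤ ∑ ij ∈ P, ∑ f ∈ Finset.univ.filter
          (fun f : Fin n → α => f ij.1 = f ij.2), ∏ i, w (f i) :=
        sum_biUnion_le_sum _ _ _ hnn
    _ = ∑ ij ∈ P, ∑ c, (w c)^2 := by
        refine Finset.sum_congr rfl fun ij hij => ?_
        rw [hP, Finset.mem_filter] at hij
        exact pair_sum w hs hij.2.ne
    _ = (n.choose 2 : ℝ) * ∑ c, (w c)^2 := by
        rw [Finset.sum_const, nsmul_eq_mul]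
        congr 1
        rw [hP, card_pairs n]

/-! ### The total variation bound for a single shuffle -/

lemma shuffle_tv {n : ℕ} {α : Type*} [Fintype α] [LinearOrder α] (w : α → ℝ)
    (hw : ∀ c, 0 ≤ w c) (hs : ∑ c, w c = 1) :
    (1 / 2) * ∑ π : Equiv.Perm (Fin n), |shuffleP n w π - 1 / (Nat.factorial n : ℝ)|
      ≤ (n.choose 2 : ℝ) * ∑ c, (w c)^2 := by
  classical
  -- total mass of shuffleP is 1
  have hsum1 : ∑ π : Equiv.Perm (Fin n), shuffleP n w π = 1 := by
    unfold shuffleP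
    rw [Finset.sum_fiberwise Finset.univ (fun f : Fin n → α => (Tuple.sort f)⁻¹)
      (fun f => ∏ i, w (f i))]
    have hps := Finset.prod_univ_sum (fun _ : Fin n => (Finset.univ : Finset α))
      (fun _ b => w b)
    rw [Fintype.piFinset_univ] at hps
    rw [← hps]
    simp [hs]
  -- the sum of the non-injective parts
  set q : ℝ := ∑ f ∈ Finset.univ.filter
      (fun f : Fin n → α => ¬ Function.Injective f), ∏ i, w (f i) with hqdef
  have hq : ∑ π : Equiv.Perm (Fin n), Bni n w π = q := by
    rw [hqdef]
    rw [← Finset.sum_fiberwise (Finset.univ.filter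
      (fun f : Fin n → α => ¬ Function.Injective f))
      (fun f : Fin n → α => (Tuple.sort f)⁻¹) (fun f => ∏ i, w (f i))]
    refine Finset.sum_congr rfl fun π _ => ?_
    rw [Bni]
    apply Finset.sum_congr _ (fun _ _ => rfl)
    rw [Finset.filter_filter]
  have hq0 : 0 ≤ q := Finset.sum_nonneg fun f _ => Finset.prod_nonneg fun i _ => hw _
  have hB0 : ∀ π : Equiv.Perm (Fin n), 0 ≤ Bni n w π :=
    fun π => Finset.sum_nonneg fun f _ => Finset.prod_nonneg fun i _ => hw _
  set F : ℝ := (Nat.factorial n : ℝ) with hF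
  have hF0 : 0 < F := by
    rw [hF]; exact_mod_cast Nat.factorial_pos n
  have hcard : (Finset.univ : Finset (Equiv.Perm (Fin n))).card = Nat.factorial n := by
    rw [Finset.card_univ, Fintype.card_perm, Fintype.card_fin]
  -- key identity : F * Ainj 1 + q = 1
  have hkey : F * Ainj n w 1 + q = 1 := by
    rw [← hsum1]
    have : ∀ π : Equiv.Perm (Fin n), shuffleP n w π = Ainj n w 1 + Bni n w π := by
      intro π; rw [shuffleP_split, Ainj_const]
    rw [Finset.sum_congr rfl fun π _ => this π, Finset.sum_add_distrib, hq,
      Finset.sum_const, hcard, nsmul_eq_mul, hF]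
  have hA1 : Ainj n w 1 ≤ 1 / F := by
    rw [le_div_iff₀ hF0]
    nlinarith
  have hpt : ∀ π : Equiv.Perm (Fin n),
      |shuffleP n w π - 1 / F| ≤ (1 / F - Ainj n w 1) + Bni n w π := by
    intro π
    rw [shuffleP_split, Ainj_const]
    have : Ainj n w 1 + Bni n w π - 1 / F = (Ainj n w 1 - 1 / F) + Bni n w π := by ring
    rw [this]
    refine (abs_add_le _ _).trans ?_
    rw [abs_of_nonpos (by linarith), abs_of_nonneg (hB0 π)]
    linarith
  have hsumpt : ∑ π : Equiv.Perm (Fin n), |shuffleP n w π - 1 / F| ≤ 2 * q := by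
    refine (Finset.sum_le_sum fun π _ => hpt π).trans ?_
    rw [Finset.sum_add_distrib, hq, Finset.sum_const, hcard, nsmul_eq_mul, ← hF]
    have : F * (1 / F - Ainj n w 1) = 1 - F * Ainj n w 1 := by
      field_simp
    rw [this]
    nlinarith
  have hbound := noninj_bound (n := n) w hw hs
  rw [← hqdef] at hbound
  calc (1 / 2) * ∑ π : Equiv.Perm (Fin n), |shuffleP n w π - 1 / F|
      ≤ (1 / 2) * (2 * q) := by linarith [hsumpt]
    _ = q := by ring
    _ ≤ (n.choose 2 : ℝ) * ∑ c, (w c)^2 := hbound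

/-- The total variation distance of the `k`-fold convolution of the biased riffle
shuffle `P_{n,a,p}` to the uniform distribution is at most
`C(n,2) (p₁² + ⋯ + p_a²)^k`. -/
theorem stmt9 (n a k : ℕ) (p : Fin a → ℝ) (hp : ∀ i, 0 ≤ p i) (hs : ∑ i, p i = 1) :
    (1 / 2) * ∑ π : Equiv.Perm (Fin n),
        |convPow n (shuffleP n p) k π - 1 / (Nat.factorial n : ℝ)| ≤
      (n.choose 2 : ℝ) * (∑ i, p i ^ 2) ^ k := by
  have hwnn : ∀ x : Alph a k, 0 ≤ wt p k x := wt_nonneg p hp k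
  have hwsum : ∑ x : Alph a k, wt p k x = 1 := by
    have := wt_sum_pow p 1 k
    simpa [hs] using this
  have h := shuffle_tv (n := n) (wt p k) hwnn hwsum
  rw [wt_sum_pow p 2 k] at h
  simp_rw [convPow_eq n a p k]
  exact h
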